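/- Joint convexity of the exponential collision divergence: For positive semidefinite complex d×d matrices ρ₁, ρ₂, positive definite d×d matrices σ₁, σ₂, and t ∈ [0,1], it holds that Tr[ ( (tσ₁+(1−t)σ₂)^{−1/4} (tρ₁+(1−t)ρ₂) (tσ₁+(1−t)σ₂)^{−1/4} )² ] ≤ t·Tr[ (σ₁^{−1/4} ρ₁ σ₁^{−1/4})² ] + (1−t)·Tr[ (σ₂^{−1/4} ρ₂ σ₂^{−1/4})² ]. -/

import Mathlib

open scoped Kronecker ComplexOrder
open MeasureTheory Matrix

noncomputable section

namespace QD

/-! ### Haar measure on the unitary group -/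

variable {n : Type*} [Fintype n] [DecidableEq n]

theorem isClosed_unitaryGroup :
    IsClosed ((Matrix.unitaryGroup n ℂ : Set (Matrix n n ℂ))) := by
  have h1 : Continuous fun A : Matrix n n ℂ => star A * A :=
    Continuous.matrix_mul continuous_star continuous_id
  have h2 : Continuous fun A : Matrix n n ℂ => A * star A :=
    Continuous.matrix_mul continuous_id continuous_star
  have heq : (Matrix.unitaryGroup n ℂ : Set (Matrix n n ℂ)) =
      {A | star A * A = 1} ∩ {A | A * star A = 1} := by
    ext A; exact Iff.rfl
  rw [heq]
  exact (isClosed_eq h1 continuous_const).inter (isClosed_eq h2 continuous_const)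

theorem isCompact_unitaryGroup :
    IsCompact ((Matrix.unitaryGroup n ℂ : Set (Matrix n n ℂ))) := by
  have hK : IsCompact {A : Matrix n n ℂ | ∀ i j, A i j ∈ Metric.closedBall (0 : ℂ) 1} := by
    have heq : {A : Matrix n n ℂ | ∀ i j, A i j ∈ Metric.closedBall (0 : ℂ) 1} =
        Set.pi Set.univ fun _ : n => Set.pi Set.univ fun _ : n => Metric.closedBall (0 : ℂ) 1 := by
      refine Set.eq_of_subset_of_subset ?_ ?_
      · intro A hA
        exact Set.mem_univ_pi.mpr fun i => Set.mem_univ_pi.mpr fun j => hA i j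
      · intro A hA i j
        exact Set.mem_univ_pi.mp (Set.mem_univ_pi.mp hA i) j
    rw [heq]
    exact isCompact_univ_pi fun _ => isCompact_univ_pi fun _ => isCompact_closedBall _ _
  refine IsCompact.of_isClosed_subset hK isClosed_unitaryGroup ?_
  intro A hA i j
  simpa [Metric.mem_closedBall, dist_eq_norm] using entry_norm_bound_of_unitary hA i j

instance : CompactSpace (Matrix.unitaryGroup n ℂ) :=
  isCompact_iff_compactSpace.mp isCompact_unitaryGroup

instance : IsTopologicalGroup (Matrix.unitaryGroup n ℂ) where
  continuous_mul := by
    apply Continuous.subtype_mk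
    exact ((continuous_subtype_val.comp continuous_fst).matrix_mul
      (continuous_subtype_val.comp continuous_snd))
  continuous_inv :=
    Continuous.subtype_mk (continuous_star.comp continuous_subtype_val) _

instance : MeasurableSpace (Matrix.unitaryGroup n ℂ) := borel _

instance : BorelSpace (Matrix.unitaryGroup n ℂ) := ⟨rfl⟩

/-- The normalized Haar (probability) measure on the unitary group of `ℂ^n`. -/
def haarU (n : Type*) [Fintype n] [DecidableEq n] : Measure (Matrix.unitaryGroup n ℂ) :=
  Measure.haarMeasure (⊤ : TopologicalSpace.PositiveCompacts (Matrix.unitaryGroup n ℂ))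

/-- Entrywise (Bochner) integral of a matrix-valued function. -/
def matIntegral {G : Type*} [MeasurableSpace G] (μ : Measure G) {m l : Type*}
    (f : G → Matrix m l ℂ) : Matrix m l ℂ :=
  Matrix.of fun i j => ∫ g, f g i j ∂μ

/-! ### Basic matrix-analytic quantities -/

/-- Trace norm `‖X‖₁ = Tr √(XᴴX)`. -/
def traceNorm (X : Matrix n n ℂ) : ℝ :=
  (((Matrix.posSemidef_conjTranspose_mul_self X).1.eigenvectorUnitary : Matrix n n ℂ) *
    Matrix.diagonal (fun i => ((Real.sqrt
      ((Matrix.posSemidef_conjTranspose_mul_self X).1.eigenvalues i) : ℝ) : ℂ)) *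
    (star (Matrix.posSemidef_conjTranspose_mul_self X).1.eigenvectorUnitary : Matrix n n ℂ)).trace.re

/-- Hilbert–Schmidt (Schatten-2) norm `‖X‖₂ = √(Tr[XᴴX])`. -/
def hsNorm (X : Matrix n n ℂ) : ℝ :=
  Real.sqrt ((Xᴴ * X).trace.re)

/-- A density operator: positive semidefinite with unit trace. -/
def IsDensity (ρ : Matrix n n ℂ) : Prop := ρ.PosSemidef ∧ ρ.trace = 1

/-- Eigenvalues of a matrix (junk value `0` off the Hermitian matrices). -/
def eigvals (H : Matrix n n ℂ) : n → ℝ :=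
  if h : H.IsHermitian then h.eigenvalues else 0

/-- Number of distinct eigenvalues `|spec(H)|`. -/
def specCount (H : Matrix n n ℂ) : ℕ := (Finset.univ.image (eigvals H)).card

/-- Spectral projection of a Hermitian matrix onto the eigenspace of `μ`
(junk value `0` off the Hermitian matrices). -/
def eigProj (H : Matrix n n ℂ) (μ : ℝ) : Matrix n n ℂ :=
  if h : H.IsHermitian then
    (h.eigenvectorUnitary : Matrix n n ℂ) *
      Matrix.diagonal (fun i => if h.eigenvalues i = μ then (1 : ℂ) else 0) *
      (h.eigenvectorUnitary : Matrix n n ℂ)ᴴ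
  else 0

/-- The pinching map `P_H[L] = ∑_i e_i L e_i`, the sum running over the spectral
projections `e_i` onto the distinct eigenvalues of `H`. -/
def pinch (H L : Matrix n n ℂ) : Matrix n n ℂ :=
  ∑ μ ∈ Finset.univ.image (eigvals H), eigProj H μ * L * eigProj H μ

/-- The projection `{X ≤ Y}` onto the span of eigenvectors of `Y - X` with nonnegative
eigenvalues. -/
def projLE (X Y : Matrix n n ℂ) : Matrix n n ℂ :=
  if h : (Y - X).IsHermitian then
    (h.eigenvectorUnitary : Matrix n n ℂ) *
      Matrix.diagonal (fun i => if 0 ≤ h.eigenvalues i then (1 : ℂ) else 0) *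
      (h.eigenvectorUnitary : Matrix n n ℂ)ᴴ
  else 0

/-- The projection onto the span of eigenvectors of `H` with positive eigenvalues. -/
def projPos (H : Matrix n n ℂ) : Matrix n n ℂ :=
  if h : H.IsHermitian then
    (h.eigenvectorUnitary : Matrix n n ℂ) *
      Matrix.diagonal (fun i => if 0 < h.eigenvalues i then (1 : ℂ) else 0) *
      (h.eigenvectorUnitary : Matrix n n ℂ)ᴴ
  else 0

/-- Real power of a Hermitian matrix through the spectral decomposition
(junk value `0` off the Hermitian matrices). -/
def rpow (H : Matrix n n ℂ) (r : ℝ) : Matrix n n ℂ :=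
  if h : H.IsHermitian then
    (h.eigenvectorUnitary : Matrix n n ℂ) *
      Matrix.diagonal (fun i => ((h.eigenvalues i ^ r : ℝ) : ℂ)) *
      (h.eigenvectorUnitary : Matrix n n ℂ)ᴴ
  else 0

/-- Matrix logarithm of a Hermitian (positive definite) matrix through the spectral
decomposition (junk value `0` off the Hermitian matrices). -/
def matLog (H : Matrix n n ℂ) : Matrix n n ℂ :=
  if h : H.IsHermitian then
    (h.eigenvectorUnitary : Matrix n n ℂ) *
      Matrix.diagonal (fun i => ((Real.log (h.eigenvalues i) : ℝ) : ℂ)) *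
      (h.eigenvectorUnitary : Matrix n n ℂ)ᴴ
  else 0

/-! ### Divergences -/

/-- `ε`-information-spectrum divergence
`D_s^ε(ρ‖σ) = sup {log c : c > 0, Tr[ρ {ρ ≤ cσ}] ≤ ε}`. -/
def Ds (ε : ℝ) (ρ σ : Matrix n n ℂ) : ℝ :=
  sSup {x : ℝ | ∃ c : ℝ, 0 < c ∧ (ρ * projLE ρ ((c : ℂ) • σ)).trace.re ≤ ε ∧ x = Real.log c}

/-- `ε`-hypothesis-testing divergence
`D_h^ε(ρ‖σ) = sup {-log Tr[σT] : 0 ≤ T ≤ 1, Tr[ρT] ≥ 1 - ε}`. -/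
def Dh (ε : ℝ) (ρ σ : Matrix n n ℂ) : ℝ :=
  sSup {x : ℝ | ∃ T : Matrix n n ℂ, T.PosSemidef ∧ (1 - T).PosSemidef ∧
    1 - ε ≤ (ρ * T).trace.re ∧ x = -Real.log ((σ * T).trace.re)}

/-- `exp D₂*(ρ‖σ) = Tr[(σ^{-1/4} ρ σ^{-1/4})²]`, the exponential of the collision
divergence. -/
def expD2 (ρ σ : Matrix n n ℂ) : ℝ :=
  ((rpow σ (-(1/4 : ℝ)) * ρ * rpow σ (-(1/4 : ℝ))) ^ 2).trace.re

/-- Quantum relative entropy `D(ρ‖σ) = Tr[ρ(log ρ - log σ)]`. -/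
def relEntropy (ρ σ : Matrix n n ℂ) : ℝ :=
  (ρ * (matLog ρ - matLog σ)).trace.re

/-- Quantum relative entropy variance `V(ρ‖σ) = Tr[ρ(log ρ - log σ)²] - D(ρ‖σ)²`. -/
def relVar (ρ σ : Matrix n n ℂ) : ℝ :=
  ((ρ * (matLog ρ - matLog σ) ^ 2).trace.re) - (relEntropy ρ σ) ^ 2

/-! ### Bipartite notions; the first factor is the `A` system -/

variable {a b e : Type*}

/-- Partial trace over the first tensor factor. -/
def ptraceFst [Fintype a] (X : Matrix (a × b) (a × b) ℂ) : Matrix b b ℂ :=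
  Matrix.of fun i j => ∑ x, X (x, i) (x, j)

/-- Partial trace over the `A₁` factor of a tripartite `(A₁ ⊗ C) ⊗ E` system. -/
def ptraceA1 [Fintype a] (X : Matrix ((a × b) × e) ((a × b) × e) ℂ) :
    Matrix (b × e) (b × e) ℂ :=
  Matrix.of fun p q => ∑ x, X ((x, p.1), p.2) ((x, q.1), q.2)

/-- Pinching of a bipartite operator with respect to a state on the second factor:
`P_{σ} = id ⊗ (pinching w.r.t. σ)`. -/
def pinchSnd [Fintype a] [DecidableEq a] [Fintype b] [DecidableEq b]
    (σ : Matrix b b ℂ) (L : Matrix (a × b) (a × b) ℂ) : Matrix (a × b) (a × b) ℂ :=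
  ∑ μ ∈ Finset.univ.image (eigvals σ),
    ((1 : Matrix a a ℂ) ⊗ₖ eigProj σ μ) * L * ((1 : Matrix a a ℂ) ⊗ₖ eigProj σ μ)

/-- Conditional `ε`-hypothesis-testing entropy `H_h^ε(A|B)_ρ = -D_h^ε(ρ_{AB} ‖ 1_A ⊗ ρ_B)`. -/
def Hh [Fintype a] [DecidableEq a] [Fintype b] [DecidableEq b] (ε : ℝ)
    (ρ : Matrix (a × b) (a × b) ℂ) : ℝ :=
  -(Dh ε ρ ((1 : Matrix a a ℂ) ⊗ₖ ptraceFst ρ))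

/-- Conditional entropy `H(A|B)_ρ = -Tr[ρ (log ρ - log (1_A ⊗ ρ_B))]`. -/
def condEntropy [Fintype a] [DecidableEq a] [Fintype b] [DecidableEq b]
    (ρ : Matrix (a × b) (a × b) ℂ) : ℝ :=
  -relEntropy ρ ((1 : Matrix a a ℂ) ⊗ₖ ptraceFst ρ)

/-- Conditional information variance `V(A|B)_ρ`. -/
def condVar [Fintype a] [DecidableEq a] [Fintype b] [DecidableEq b]
    (ρ : Matrix (a × b) (a × b) ℂ) : ℝ :=
  relVar ρ ((1 : Matrix a a ℂ) ⊗ₖ ptraceFst ρ)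

/-- The average decoupling error
`Δ = (1/2) ∫ ‖Tr_{A₁}[(U ⊗ 1_E) ρ (U ⊗ 1_E)†] - (1_C/|C|) ⊗ ρ_E‖₁ dU`,
with respect to the normalized Haar measure, for a state on `(A₁ ⊗ C) ⊗ E`. -/
def decErr {a c e : Type*} [Fintype a] [DecidableEq a] [Fintype c] [DecidableEq c]
    [Fintype e] [DecidableEq e] (ρ : Matrix ((a × c) × e) ((a × c) × e) ℂ) : ℝ :=
  (1 / 2) * ∫ U : Matrix.unitaryGroup (a × c) ℂ,
    traceNorm
      (ptraceA1 (((U : Matrix (a × c) (a × c) ℂ) ⊗ₖ (1 : Matrix e e ℂ)) * ρ *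
          ((U : Matrix (a × c) (a × c) ℂ) ⊗ₖ (1 : Matrix e e ℂ))ᴴ) -
        (((Fintype.card c : ℂ)⁻¹ • (1 : Matrix c c ℂ)) ⊗ₖ ptraceFst ρ))
    ∂(haarU (a × c))

/-! ### Asymptotics -/

/-- `n`-fold Kronecker tensor power of a matrix. -/
def kronPow {α : Type*} [Fintype α] (ρ : Matrix α α ℂ) (N : ℕ) :
    Matrix (Fin N → α) (Fin N → α) ℂ :=
  Matrix.of fun p q => ∏ i, ρ (p i) (q i)

/-- `n`-fold Kronecker tensor power of a bipartite matrix, regarded as a bipartite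
matrix on `A^n ⊗ E^n`. -/
def tensorPow {α β : Type*} [Fintype α] [Fintype β] (ρ : Matrix (α × β) (α × β) ℂ) (N : ℕ) :
    Matrix ((Fin N → α) × (Fin N → β)) ((Fin N → α) × (Fin N → β)) ℂ :=
  Matrix.of fun p q => ∏ i, ρ (p.1 i, p.2 i) (q.1 i, q.2 i)

/-- The maximal remainder dimension `ℓ^ε(A|E)_ρ`: the largest `dC` dividing `|A|` such
that, for an identification `A ≅ A₁ ⊗ C` with `|C| = dC`, the average decoupling error
is at most `ε`. -/
def maxRemDim {α β : Type*} [Fintype α] [DecidableEq α] [Fintype β] [DecidableEq β]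
    (ε : ℝ) (ρ : Matrix (α × β) (α × β) ℂ) : ℕ :=
  sSup {dC : ℕ | dC ∣ Fintype.card α ∧
    ∃ φ : α ≃ Fin (Fintype.card α / dC) × Fin dC,
      decErr (Matrix.of fun p q => ρ (φ.symm p.1, p.2) (φ.symm q.1, q.2)) ≤ ε}

/-- The inverse of the cumulative distribution function of the standard normal
distribution. -/
def PhiInv (ε : ℝ) : ℝ :=
  sSup {u : ℝ | (∫ t in Set.Iic u, Real.exp (-(t ^ 2) / 2) / Real.sqrt (2 * Real.pi)) ≤ ε}


/-- `1_{A₁} ⊗ Y` : reinsertion of the identity on the `A₁` factor of `(A₁ ⊗ A₂) ⊗ E`. -/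
def insertIdFst {a1 a2 e : Type*} [DecidableEq a1] (Y : Matrix (a2 × e) (a2 × e) ℂ) :
    Matrix ((a1 × a2) × e) ((a1 × a2) × e) ℂ :=
  Matrix.of fun p q => (if p.1.1 = q.1.1 then (1 : ℂ) else 0) * Y (p.1.2, p.2) (q.1.2, q.2)

/-- The swap operator `F = ∑_{i,j} |i⟩⟨j| ⊗ |j⟩⟨i|` on `ℂ^α ⊗ ℂ^α`. -/
def swapOp (α : Type*) [Fintype α] [DecidableEq α] : Matrix (α × α) (α × α) ℂ :=
  ∑ i : α, ∑ j : α, (Matrix.single i j (1 : ℂ)) ⊗ₖ (Matrix.single j i (1 : ℂ))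

/-- The operator on `(ℂ^{A₁} ⊗ ℂ^{A₂}) ⊗ (ℂ^{A₁} ⊗ ℂ^{A₂})` acting as the identity on the
two `A₁` factors and as the swap on the two `A₂` factors. -/
def partialSwapOp (a1 a2 : Type*) [DecidableEq a1] [DecidableEq a2] :
    Matrix ((a1 × a2) × (a1 × a2)) ((a1 × a2) × (a1 × a2)) ℂ :=
  Matrix.of fun p q =>
    if p.1.1 = q.1.1 ∧ p.2.1 = q.2.1 ∧ p.1.2 = q.2.2 ∧ p.2.2 = q.1.2 then (1 : ℂ) else 0

end QD

/-!
The proof rests on the variational formula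
`Tr[(σ^{-1/4} ρ σ^{-1/4})²] = max_H (2 Re Tr[ρH] - Re Tr[H σ^{1/2} H σ^{1/2}])`, the maximum
being over Hermitian `H` and attained at `H = σ^{-1/2} ρ σ^{-1/2}`: the difference is
`Tr[(σ^{1/4} H σ^{1/4} - σ^{-1/4} ρ σ^{-1/4})²] ≥ 0`. For fixed `H` the objective is linear in
`ρ` and convex in `σ`, because `σ ↦ Tr[H σ^{1/2} H σ^{1/2}]` is concave (Lieb's concavity at
exponent `1/2`). A supremum of jointly convex functions is jointly convex.

The concavity is Ando's: `Tr[H σ^{1/2} H σ^{1/2}] = ⟨vec H, (σ^{1/2}ᵀ ⊗ σ^{1/2}) vec H⟩`, and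
for commuting positive `P, Q` the product `P Q` is the largest `X ≥ 0` with
`[[P², X], [X, Q²]] ≥ 0` (Schur complement plus operator monotonicity of the square root). Since
this block condition is convex, `(P², Q²) ↦ P Q` is jointly concave on commuting pairs; apply it
to `P = 1 ⊗ σ^{1/2}` and `Q = σ^{1/2}ᵀ ⊗ 1`, whose squares are affine in `σ`.
-/

open scoped MatrixOrder Matrix.Norms.L2Operator

lemma CFC.le_of_sq_le_sq {A : Type*} [CStarAlgebra A] [PartialOrder A] [StarOrderedRing A]
    {a b : A} (ha : 0 ≤ a) (hb : 0 ≤ b) (h : a ^ 2 ≤ b ^ 2) : a ≤ b := by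
  simpa only [CFC.sqrt_sq a, CFC.sqrt_sq b] using CFC.sqrt_le_sqrt _ _ h

namespace Matrix

lemma star_vec_dotProduct_kronecker_mulVec_vec {m n R : Type*} [Fintype m] [Fintype n]
    [CommSemiring R] [StarRing R] (A : Matrix m m R) (B : Matrix n n R) (H : Matrix m n R) :
    star (vec H) ⬝ᵥ ((Bᵀ ⊗ₖ A) *ᵥ vec H) = (Hᴴ * A * H * B).trace := by
  simp only [kronecker_mulVec_vec, star_vec_dotProduct_vec, transpose_transpose, Matrix.mul_assoc]

lemma trace_sq_conj_eq {n R : Type*} [Fintype n] [DecidableEq n] [CommRing R]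
    {F Q ρ H : Matrix n n R} (hFQ : F * Q = 1) (hQF : Q * F = 1) :
    ((Q * ρ * Q) ^ 2).trace = 2 * (ρ * H).trace - (H * (F * F) * H * (F * F)).trace +
      ((F * H * F - Q * ρ * Q) ^ 2).trace := by
  have h₁ : (F * H * F * (F * H * F)).trace = (H * (F * F) * H * (F * F)).trace := by
    simp only [mul_assoc]
    rw [trace_mul_comm F]
    simp only [mul_assoc]
  have h₂ : (F * H * F * (Q * ρ * Q)).trace = (ρ * H).trace := by
    simp only [mul_assoc]
    rw [← mul_assoc F Q, hFQ, one_mul, trace_mul_comm F]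
    simp only [mul_assoc]
    rw [hQF, mul_one, trace_mul_comm]
  have h₃ : (Q * ρ * Q * (F * H * F)).trace = (ρ * H).trace := by
    simp only [mul_assoc]
    rw [← mul_assoc Q F, hQF, one_mul, trace_mul_comm Q]
    simp only [mul_assoc]
    rw [hFQ, mul_one]
  simp only [sq, sub_mul, mul_sub, trace_sub, h₁, h₂, h₃]
  ring

lemma PosDef.smul_add_one_sub_smul {n : Type*} {A B : Matrix n n ℂ} (hA : A.PosDef)
    (hB : B.PosDef) {t : ℝ} (ht0 : 0 ≤ t) (ht1 : t ≤ 1) : (t • A + (1 - t) • B).PosDef := by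
  rcases ht0.eq_or_lt with rfl | ht0
  · simpa using hB
  · exact (hA.smul ht0).add_posSemidef (hB.posSemidef.smul (sub_nonneg.2 ht1))

lemma smul_add_one_sub_smul_nonneg {n : Type*} [Fintype n] {A B : Matrix n n ℂ} (hA : 0 ≤ A)
    (hB : 0 ≤ B) {t : ℝ} (ht0 : 0 ≤ t) (ht1 : t ≤ 1) : 0 ≤ t • A + (1 - t) • B := by
  rw [nonneg_iff_posSemidef] at *
  exact (hA.smul ht0).add (hB.smul (sub_nonneg.2 ht1))

lemma IsHermitian.re_trace_sq_nonneg {n : Type*} [Fintype n] [DecidableEq n] {G : Matrix n n ℂ}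
    (hG : G.IsHermitian) : 0 ≤ (G ^ 2).trace.re := by
  have := (posSemidef_conjTranspose_mul_self G).trace_nonneg
  rw [hG.eq, ← sq] at this
  exact (Complex.nonneg_iff.1 this).1

variable {N : Type*} [Fintype N] [DecidableEq N]

lemma commute_inv_left {P Q : Matrix N N ℂ} (hP : IsUnit P) (h : Commute P Q) :
    Commute P⁻¹ Q := by
  have := h.units_inv_left (u := hP.unit)
  rwa [coe_units_inv] at this

lemma fromBlocks_mul_self_nonneg {P Q : Matrix N N ℂ} (hP : P.IsHermitian) (hQ : Q.IsHermitian)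
    (h : Commute P Q) : 0 ≤ fromBlocks (P * P) (P * Q) (P * Q) (Q * Q) := by
  have : fromBlocks (P * P) (P * Q) (P * Q) (Q * Q) =
      (fromBlocks P Q 0 0)ᴴ * fromBlocks P Q 0 0 := by
    simp [fromBlocks_conjTranspose, fromBlocks_multiply, hP.eq, hQ.eq, h.eq]
  rw [this, nonneg_iff_posSemidef]
  exact posSemidef_conjTranspose_mul_self _

theorem le_mul_of_fromBlocks_nonneg {P Q X : Matrix N N ℂ} (hP : P.PosDef) (hQ : 0 ≤ Q)
    (hPQ : Commute P Q) (hX : 0 ≤ X) (h : 0 ≤ fromBlocks (P * P) X X (Q * Q)) : X ≤ P * Q := by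
  have hPdet : IsUnit P.det := (isUnit_iff_isUnit_det P).1 hP.isUnit
  set R := P⁻¹
  have hR : 0 ≤ R := nonneg_iff_posSemidef.2 hP.inv.posSemidef
  have hRQ : Commute R Q := commute_inv_left hP.isUnit hPQ
  have hPR : P * R = 1 := mul_nonsing_inv P hPdet
  have hRP : R * P = 1 := nonsing_inv_mul P hPdet
  have hPP : (P * P).PosDef := by
    have := posSemidef_conjTranspose_mul_self P
    rw [hP.1.eq] at this
    exact this.posDef_iff_isUnit.2 (hP.isUnit.mul hP.isUnit)
  let := (P * P).invertibleOfIsUnitDet ((isUnit_iff_isUnit_det _).1 hPP.isUnit)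
  have hschur : X * (R * R) * X ≤ Q * Q := by
    have hXh : Xᴴ = X := hX.star_eq
    have := (PosDef.fromBlocks₁₁ X (Q * Q) hPP).1 (by rw [hXh]; exact nonneg_iff_posSemidef.1 h)
    rwa [hXh, mul_inv_rev] at this
  have hW : (R * X * R) ^ 2 ≤ (R * Q) ^ 2 := by
    calc (R * X * R) ^ 2 = R * (X * (R * R) * X) * R := by noncomm_ring
      _ ≤ R * (Q * Q) * R := conjugate_le_conjugate_of_nonneg hschur hR
      _ = R * Q * (Q * R) := by noncomm_ring
      _ = (R * Q) ^ 2 := by rw [← hRQ.eq, sq]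
  have := conjugate_le_conjugate_of_nonneg
    (CFC.le_of_sq_le_sq (conjugate_nonneg_of_nonneg hX hR) (hRQ.mul_nonneg hR hQ) hW)
    (nonneg_iff_posSemidef.2 hP.posSemidef)
  calc X = (P * R) * X * (R * P) := by rw [hPR, hRP, one_mul, mul_one]
    _ = P * (R * X * R) * P := by noncomm_ring
    _ ≤ P * (R * Q) * P := this
    _ = (P * R) * (Q * P) := by noncomm_ring
    _ = P * Q := by rw [hPR, one_mul, hPQ.eq]

theorem smul_add_one_sub_smul_mul_le_of_commute {P Q P₁ Q₁ P₂ Q₂ : Matrix N N ℂ}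
    (hP : P.PosDef) (hQ : 0 ≤ Q) (hP₁ : 0 ≤ P₁) (hQ₁ : 0 ≤ Q₁) (hP₂ : 0 ≤ P₂) (hQ₂ : 0 ≤ Q₂)
    (hPQ : Commute P Q) (hPQ₁ : Commute P₁ Q₁) (hPQ₂ : Commute P₂ Q₂) {t : ℝ} (ht0 : 0 ≤ t)
    (ht1 : t ≤ 1) (hPP : P * P = t • (P₁ * P₁) + (1 - t) • (P₂ * P₂))
    (hQQ : Q * Q = t • (Q₁ * Q₁) + (1 - t) • (Q₂ * Q₂)) :
    t • (P₁ * Q₁) + (1 - t) • (P₂ * Q₂) ≤ P * Q := by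
  refine le_mul_of_fromBlocks_nonneg hP hQ hPQ
    (smul_add_one_sub_smul_nonneg (hPQ₁.mul_nonneg hP₁ hQ₁) (hPQ₂.mul_nonneg hP₂ hQ₂) ht0 ht1) ?_
  rw [hPP, hQQ, ← fromBlocks_add, ← fromBlocks_smul, ← fromBlocks_smul]
  exact smul_add_one_sub_smul_nonneg
    (fromBlocks_mul_self_nonneg hP₁.isSelfAdjoint hQ₁.isSelfAdjoint hPQ₁)
    (fromBlocks_mul_self_nonneg hP₂.isSelfAdjoint hQ₂.isSelfAdjoint hPQ₂) ht0 ht1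

theorem re_trace_mul_mul_mul_concave {A A₁ A₂ H : Matrix N N ℂ} (hA : A.PosDef) (hA₁ : 0 ≤ A₁)
    (hA₂ : 0 ≤ A₂) (hH : H.IsHermitian) {t : ℝ} (ht0 : 0 ≤ t) (ht1 : t ≤ 1)
    (hAA : A * A = t • (A₁ * A₁) + (1 - t) • (A₂ * A₂)) :
    t * (H * A₁ * H * A₁).trace.re + (1 - t) * (H * A₂ * H * A₂).trace.re ≤
      (H * A * H * A).trace.re := by
  have left_nonneg {B : Matrix N N ℂ} (hB : 0 ≤ B) : 0 ≤ (1 : Matrix N N ℂ) ⊗ₖ B :=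
    nonneg_iff_posSemidef.2 (PosSemidef.one.kronecker (nonneg_iff_posSemidef.1 hB))
  have right_nonneg {B : Matrix N N ℂ} (hB : 0 ≤ B) : 0 ≤ Bᵀ ⊗ₖ (1 : Matrix N N ℂ) :=
    nonneg_iff_posSemidef.2 ((nonneg_iff_posSemidef.1 hB).transpose.kronecker PosSemidef.one)
  have mul_eq (B : Matrix N N ℂ) : (1 ⊗ₖ B) * (Bᵀ ⊗ₖ 1) = Bᵀ ⊗ₖ B := by
    rw [← mul_kronecker_mul, one_mul, mul_one]
  have hcomm (B : Matrix N N ℂ) : Commute ((1 : Matrix N N ℂ) ⊗ₖ B) (Bᵀ ⊗ₖ 1) := by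
    rw [Commute, SemiconjBy, mul_eq, ← mul_kronecker_mul, mul_one, one_mul]
  have hle := smul_add_one_sub_smul_mul_le_of_commute (PosDef.one.kronecker hA)
    (right_nonneg (nonneg_iff_posSemidef.2 hA.posSemidef)) (left_nonneg hA₁) (right_nonneg hA₁)
    (left_nonneg hA₂) (right_nonneg hA₂) (hcomm A) (hcomm A₁) (hcomm A₂) ht0 ht1
    (by simp only [← mul_kronecker_mul, one_mul, hAA, kronecker_add, kronecker_smul])
    (by simp only [← mul_kronecker_mul, mul_one, ← transpose_mul, hAA, transpose_add,
      transpose_smul, add_kronecker, smul_kronecker])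
  have := (le_iff.1 hle).dotProduct_mulVec_nonneg (vec H)
  simp only [mul_eq, sub_mulVec, add_mulVec, smul_mulVec, dotProduct_sub, dotProduct_add,
    dotProduct_smul, star_vec_dotProduct_kronecker_mulVec_vec, hH.eq] at this
  have := (Complex.nonneg_iff.1 this).1
  simp only [Complex.sub_re, Complex.add_re, Complex.smul_re, smul_eq_mul] at this
  linarith

end Matrix

namespace QD

variable {n : Type*} [Fintype n] [DecidableEq n]

lemma rpow_eq_cfc {σ : Matrix n n ℂ} (hσ : σ.IsHermitian) (r : ℝ) :
    rpow σ r = cfc (· ^ r : ℝ → ℝ) σ := by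
  rw [rpow, dif_pos hσ, hσ.cfc_eq]
  rfl

lemma rpow_add {σ : Matrix n n ℂ} (hσ : σ.PosDef) (a b : ℝ) :
    rpow σ (a + b) = rpow σ a * rpow σ b := by
  have hspec : ∀ x ∈ spectrum ℝ σ, 0 < x := fun _ hx =>
    (isStrictlyPositive_iff_posDef.2 hσ).spectrum_pos hx
  have hcont (r : ℝ) : ContinuousOn (· ^ r : ℝ → ℝ) (spectrum ℝ σ) :=
    continuousOn_id.rpow_const fun x hx => Or.inl (hspec x hx).ne'
  rw [rpow_eq_cfc hσ.1, rpow_eq_cfc hσ.1, rpow_eq_cfc hσ.1, ← cfc_mul _ _ σ (hcont a) (hcont b)]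
  exact cfc_congr fun x hx => Real.rpow_add (hspec x hx) a b

lemma rpow_zero {σ : Matrix n n ℂ} (hσ : σ.IsHermitian) : rpow σ 0 = 1 := by
  simp only [rpow_eq_cfc hσ, Real.rpow_zero, cfc_const_one ℝ σ]

lemma rpow_one {σ : Matrix n n ℂ} (hσ : σ.IsHermitian) : rpow σ 1 = σ := by
  simp only [rpow_eq_cfc hσ, Real.rpow_one, cfc_id' ℝ σ]

lemma rpow_mul_rpow_neg {σ : Matrix n n ℂ} (hσ : σ.PosDef) (r : ℝ) :
    rpow σ r * rpow σ (-r) = 1 := by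
  rw [← rpow_add hσ, add_neg_cancel, rpow_zero hσ.1]

lemma rpow_neg_mul_rpow {σ : Matrix n n ℂ} (hσ : σ.PosDef) (r : ℝ) :
    rpow σ (-r) * rpow σ r = 1 := by
  rw [← rpow_add hσ, neg_add_cancel, rpow_zero hσ.1]

lemma rpow_half_mul_self {σ : Matrix n n ℂ} (hσ : σ.PosDef) :
    rpow σ (1 / 2) * rpow σ (1 / 2) = σ := by
  rw [← rpow_add hσ, add_halves, rpow_one hσ.1]

lemma rpow_isHermitian {σ : Matrix n n ℂ} (hσ : σ.IsHermitian) (r : ℝ) :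
    (rpow σ r).IsHermitian := by
  rw [rpow_eq_cfc hσ]
  exact IsSelfAdjoint.cfc

lemma rpow_nonneg {σ : Matrix n n ℂ} (hσ : σ.PosSemidef) (r : ℝ) : 0 ≤ rpow σ r := by
  rw [rpow_eq_cfc hσ.1]
  exact cfc_nonneg fun x hx =>
    Real.rpow_nonneg (spectrum_nonneg_of_nonneg (nonneg_iff_posSemidef.2 hσ) hx) r

lemma rpow_posDef {σ : Matrix n n ℂ} (hσ : σ.PosDef) (r : ℝ) : (rpow σ r).PosDef :=
  (nonneg_iff_posSemidef.1 (rpow_nonneg hσ.posSemidef r)).posDef_iff_isUnit.2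
    ((isUnit_iff_isUnit_det _).2 (isUnit_det_of_right_inverse (rpow_mul_rpow_neg hσ r)))

lemma isHermitian_rpow_mul_mul_rpow {σ ρ : Matrix n n ℂ} (hσ : σ.IsHermitian)
    (hρ : ρ.IsHermitian) (r : ℝ) : (rpow σ r * ρ * rpow σ r).IsHermitian := by
  have := isHermitian_conjTranspose_mul_mul (rpow σ r) hρ
  rwa [(rpow_isHermitian hσ r).eq] at this

/-- The objective of the variational formula `expD2 ρ σ = max_H expD2Objective ρ σ H`. -/
def expD2Objective (ρ σ H : Matrix n n ℂ) : ℝ :=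
  2 * (ρ * H).trace.re - (H * rpow σ (1 / 2) * H * rpow σ (1 / 2)).trace.re

lemma expD2_eq_expD2Objective_add {σ : Matrix n n ℂ} (hσ : σ.PosDef) (ρ H : Matrix n n ℂ) :
    expD2 ρ σ = expD2Objective ρ σ H + ((rpow σ (1 / 4) * H * rpow σ (1 / 4) -
      rpow σ (-(1 / 4)) * ρ * rpow σ (-(1 / 4))) ^ 2).trace.re := by
  have hFF : rpow σ (1 / 4) * rpow σ (1 / 4) = rpow σ (1 / 2) := by
    rw [← rpow_add hσ]; norm_num
  rw [expD2, trace_sq_conj_eq (H := H) (rpow_mul_rpow_neg hσ _) (rpow_neg_mul_rpow hσ _), hFF,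
    expD2Objective]
  simp

lemma expD2Objective_le_expD2 {ρ σ H : Matrix n n ℂ} (hσ : σ.PosDef) (hρ : ρ.IsHermitian)
    (hH : H.IsHermitian) : expD2Objective ρ σ H ≤ expD2 ρ σ := by
  rw [expD2_eq_expD2Objective_add hσ ρ H, le_add_iff_nonneg_right]
  exact IsHermitian.re_trace_sq_nonneg
    ((isHermitian_rpow_mul_mul_rpow hσ.1 hH _).sub (isHermitian_rpow_mul_mul_rpow hσ.1 hρ _))

lemma expD2Objective_rpow_neg_half {σ : Matrix n n ℂ} (hσ : σ.PosDef) (ρ : Matrix n n ℂ) :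
    expD2Objective ρ σ (rpow σ (-(1 / 2)) * ρ * rpow σ (-(1 / 2))) = expD2 ρ σ := by
  have hopt : rpow σ (1 / 4) * (rpow σ (-(1 / 2)) * ρ * rpow σ (-(1 / 2))) * rpow σ (1 / 4) =
      rpow σ (-(1 / 4)) * ρ * rpow σ (-(1 / 4)) := by
    rw [show -(1 / 2 : ℝ) = -(1 / 4) + -(1 / 4) by norm_num, rpow_add hσ]
    calc _ = rpow σ (1 / 4) * rpow σ (-(1 / 4)) * (rpow σ (-(1 / 4)) * ρ * rpow σ (-(1 / 4))) *
          (rpow σ (-(1 / 4)) * rpow σ (1 / 4)) := by simp only [mul_assoc]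
      _ = _ := by rw [rpow_mul_rpow_neg hσ, rpow_neg_mul_rpow hσ, one_mul, mul_one]
  rw [expD2_eq_expD2Objective_add hσ ρ (rpow σ (-(1 / 2)) * ρ * rpow σ (-(1 / 2))), hopt]
  simp

lemma expD2Objective_jointly_convex {ρ₁ ρ₂ σ₁ σ₂ H : Matrix n n ℂ} (hσ₁ : σ₁.PosDef)
    (hσ₂ : σ₂.PosDef) (hH : H.IsHermitian) {t : ℝ} (ht0 : 0 ≤ t) (ht1 : t ≤ 1) :
    expD2Objective (t • ρ₁ + (1 - t) • ρ₂) (t • σ₁ + (1 - t) • σ₂) H ≤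
      t * expD2Objective ρ₁ σ₁ H + (1 - t) * expD2Objective ρ₂ σ₂ H := by
  have hσ := hσ₁.smul_add_one_sub_smul hσ₂ ht0 ht1
  have := re_trace_mul_mul_mul_concave (rpow_posDef hσ (1 / 2)) (rpow_nonneg hσ₁.posSemidef _)
    (rpow_nonneg hσ₂.posSemidef _) hH ht0 ht1
    (by rw [rpow_half_mul_self hσ, rpow_half_mul_self hσ₁, rpow_half_mul_self hσ₂])
  simp only [expD2Objective, add_mul, smul_mul_assoc, trace_add, trace_smul, Complex.add_re,
    Complex.smul_re, smul_eq_mul]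
  linarith

/-- **Joint convexity of the exponential collision divergence** (Lemma 6 in the paper). -/
theorem expD2_jointly_convex
    (d : ℕ) (ρ₁ ρ₂ σ₁ σ₂ : Matrix (Fin d) (Fin d) ℂ)
    (hρ₁ : ρ₁.PosSemidef) (hρ₂ : ρ₂.PosSemidef) (hσ₁ : σ₁.PosDef) (hσ₂ : σ₂.PosDef)
    (t : ℝ) (ht0 : 0 ≤ t) (ht1 : t ≤ 1) :
    expD2 ((t : ℂ) • ρ₁ + ((1 - t : ℝ) : ℂ) • ρ₂) ((t : ℂ) • σ₁ + ((1 - t : ℝ) : ℂ) • σ₂) ≤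
      t * expD2 ρ₁ σ₁ + (1 - t) * expD2 ρ₂ σ₂ := by
  simp only [Complex.coe_smul]
  set ρ := t • ρ₁ + (1 - t) • ρ₂
  set σ := t • σ₁ + (1 - t) • σ₂
  have hσ : σ.PosDef := hσ₁.smul_add_one_sub_smul hσ₂ ht0 ht1
  have hρ : ρ.IsHermitian := ((hρ₁.smul ht0).add (hρ₂.smul (sub_nonneg.2 ht1))).1
  set H := rpow σ (-(1 / 2)) * ρ * rpow σ (-(1 / 2))
  have hH : H.IsHermitian := isHermitian_rpow_mul_mul_rpow hσ.1 hρ _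
  calc expD2 ρ σ = expD2Objective ρ σ H := (expD2Objective_rpow_neg_half hσ ρ).symm
    _ ≤ t * expD2Objective ρ₁ σ₁ H + (1 - t) * expD2Objective ρ₂ σ₂ H :=
      expD2Objective_jointly_convex hσ₁ hσ₂ hH ht0 ht1
    _ ≤ t * expD2 ρ₁ σ₁ + (1 - t) * expD2 ρ₂ σ₂ :=
      add_le_add (mul_le_mul_of_nonneg_left (expD2Objective_le_expD2 hσ₁ hρ₁.1 hH) ht0)
        (mul_le_mul_of_nonneg_left (expD2Objective_le_expD2 hσ₂ hρ₂.1 hH) (sub_nonneg.2 ht1))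

end QD
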